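/- In the Algorithm 3 setting, for every integer 0 ≤ i ≤ 1/ε: y⁽ⁱ⁾ ∈ Q and z⁽ⁱ⁾ ∈ εi·P, where εi·P = {εi·x : x ∈ P}. Consequently, y⁽ⁱ⁾⊛z⁽ⁱ⁾ ∈ (Q + P) ∩ [0,1]^n, where Q + P = {u + v : u ∈ Q, v ∈ P}. -/

import Mathlib

open scoped InnerProductSpace
open Pointwise

noncomputable section

/-- Vectors in `ℝ^n`, with the Euclidean (ℓ₂) norm and inner product. -/
abbrev Vec (n : ℕ) := EuclideanSpace ℝ (Fin n)

/-- Membership in the box `[0,1]^n`. -/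
def inBox {n : ℕ} (x : Vec n) : Prop := ∀ j, 0 ≤ x j ∧ x j ≤ 1

/-- Coordinate-wise (Hadamard) product `x ⊙ y`. -/
def had {n : ℕ} (x y : Vec n) : Vec n := WithLp.toLp 2 (fun j => x j * y j)

/-- Coordinate-wise probabilistic sum `x ⊛ y`. -/
def psum {n : ℕ} (x y : Vec n) : Vec n := WithLp.toLp 2 (fun j => x j + y j - x j * y j)

/-- The vector `1 - x` (coordinate-wise). -/
def oneM {n : ℕ} (x : Vec n) : Vec n := WithLp.toLp 2 (fun j => 1 - x j)

/-- ℓ∞-norm. -/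
def normInf {n : ℕ} (x : Vec n) : ℝ := ⨆ j, |x j|

/-- DR-submodularity of `F : [0,1]^n → ℝ`. -/
def DRSubmodular {n : ℕ} (F : Vec n → ℝ) : Prop :=
  ∀ a b : Vec n, inBox a → inBox b → (∀ j, a j ≤ b j) →
    ∀ k : ℝ, 0 < k → ∀ i : Fin n, inBox (b + EuclideanSpace.single i k) →
      F (b + EuclideanSpace.single i k) - F b ≤ F (a + EuclideanSpace.single i k) - F a

/-- `P` is down-closed (with respect to the domain `[0,1]^n`). -/
def downClosed {n : ℕ} (P : Set (Vec n)) : Prop :=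
  ∀ x y : Vec n, (∀ j, 0 ≤ x j) → (∀ j, x j ≤ y j) → y ∈ P → x ∈ P

/-- The Algorithm 3 setting (Algorithm with empirical improvements): `Q ⊆ [0,1]^n` convex,
`P ⊆ [0,1]^n` down-closed convex, `ε ∈ (0,1)` with `1/ε = N ∈ ℕ`, and sequences
`y⁽ⁱ⁾, z⁽ⁱ⁾` built from `a⁽ⁱ⁾ ∈ Q`, `b⁽ⁱ⁾ ∈ P` and `0 ≤ c⁽ⁱ⁾ ≤ z⁽ⁱ⁻¹⁾`, via
`y⁽ⁱ⁾ = (1−ε)·y⁽ⁱ⁻¹⁾ + ε·a⁽ⁱ⁾` and `z⁽ⁱ⁾ = z⁽ⁱ⁻¹⁾ + ε·(b⁽ⁱ⁾ − c⁽ⁱ⁾)`. -/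
structure Alg3Setting {n : ℕ} (Q P : Set (Vec n)) (ε : ℝ) (N : ℕ)
    (y z a b c : ℕ → Vec n) : Prop where
  hQbox : ∀ x ∈ Q, inBox x
  hQconv : Convex ℝ Q
  hPbox : ∀ x ∈ P, inBox x
  hPconv : Convex ℝ P
  hPdown : downClosed P
  hε0 : 0 < ε
  hε1 : ε < 1
  hεN : (N : ℝ) * ε = 1
  hy0Q : y 0 ∈ Q
  hy0min : ∀ x ∈ Q, normInf (y 0) ≤ normInf x
  hz0 : z 0 = 0
  haQ : ∀ i, 1 ≤ i → i ≤ N → a i ∈ Q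
  hbP : ∀ i, 1 ≤ i → i ≤ N → b i ∈ P
  hc : ∀ i, 1 ≤ i → i ≤ N → ∀ j, 0 ≤ c i j ∧ c i j ≤ z (i-1) j
  hyrec : ∀ i, 1 ≤ i → i ≤ N → y i = (1-ε) • y (i-1) + ε • a i
  hzrec : ∀ i, 1 ≤ i → i ≤ N → z i = z (i-1) + ε • (b i - c i)

open Set

section DownClosed

variable {n : ℕ} {P : Set (Vec n)}

theorem downClosed.smul_set (hP : downClosed P) {t : ℝ} (ht : 0 ≤ t) : downClosed (t • P) := by
  rintro x _ hx0 hxy ⟨p, hp, rfl⟩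
  rcases ht.eq_or_lt with rfl | ht
  · have hx : x = 0 := by
      ext j
      exact le_antisymm (by simpa using hxy j) (hx0 j)
    exact ⟨p, hp, by simp [hx]⟩
  · refine ⟨t⁻¹ • x, hP _ p (fun j => ?_) (fun j => ?_) hp, smul_inv_smul₀ ht.ne' x⟩
    · simpa using mul_nonneg (inv_nonneg.mpr ht.le) (hx0 j)
    · simpa [inv_mul_le_iff₀ ht] using hxy j

theorem downClosed.smul_set_subset (hP : downClosed P) (hPnonneg : ∀ x ∈ P, ∀ j, 0 ≤ x j)
    {t : ℝ} (ht0 : 0 ≤ t) (ht1 : t ≤ 1) : t • P ⊆ P := by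
  rintro _ ⟨x, hx, rfl⟩
  refine hP _ x (fun j => ?_) (fun j => ?_) hx
  · simpa using mul_nonneg ht0 (hPnonneg x hx j)
  · simpa using mul_le_of_le_one_left (hPnonneg x hx j) ht1

/-- One update `z ↦ z + ε (b - c)` of Algorithm 3 moves `z` from `t • P` to `(t + ε) • P`:
the part `z - ε c` stays below `z`, and convexity gives `t • P + ε • P = (t + ε) • P`. -/
theorem downClosed.add_smul_sub_mem (hPconv : Convex ℝ P) (hP : downClosed P)
    {t ε : ℝ} (ht : 0 ≤ t) (hε0 : 0 ≤ ε) (hε1 : ε ≤ 1) {z b c : Vec n} (hz : z ∈ t • P)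
    (hb : b ∈ P) (hc : ∀ j, 0 ≤ c j ∧ c j ≤ z j) : z + ε • (b - c) ∈ (t + ε) • P := by
  have hzc : z - ε • c ∈ t • P := by
    refine hP.smul_set ht _ z (fun j => ?_) (fun j => ?_) hz
    · simpa using (mul_le_of_le_one_left (hc j).1 hε1).trans (hc j).2
    · simpa using mul_nonneg hε0 (hc j).1
  rw [hPconv.add_smul ht hε0, show z + ε • (b - c) = (z - ε • c) + ε • b by module]
  exact add_mem_add hzc (smul_mem_smul_set hb)

end DownClosed

section ProbabilisticSum

variable {n : ℕ}

theorem psum_eq_add_had (x y : Vec n) : psum x y = x + had y (oneM x) := by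
  ext j
  simp only [psum, had, oneM, PiLp.add_apply, PiLp.toLp_apply]
  ring

theorem inBox_psum {x y : Vec n} (hx : inBox x) (hy : inBox y) : inBox (psum x y) := by
  intro j
  obtain ⟨hx0, hx1⟩ := hx j
  obtain ⟨hy0, hy1⟩ := hy j
  simp only [psum, PiLp.toLp_apply]
  constructor <;> nlinarith [mul_nonneg hx0 (sub_nonneg.mpr hy1),
    mul_nonneg (sub_nonneg.mpr hx1) (sub_nonneg.mpr hy1)]

theorem psum_mem_add {Q P : Set (Vec n)} (hP : downClosed P) {x y : Vec n} (hxQ : x ∈ Q)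
    (hyP : y ∈ P) (hx : inBox x) (hy : inBox y) : psum x y ∈ Q + P := by
  rw [psum_eq_add_had]
  refine add_mem_add hxQ (hP _ y (fun j => ?_) (fun j => ?_) hyP)
  · exact mul_nonneg (hy j).1 (sub_nonneg.mpr (hx j).2)
  · exact mul_le_of_le_one_right (hy j).1 (sub_le_self _ (hx j).1)

end ProbabilisticSum

namespace Alg3Setting

variable {n : ℕ} {Q P : Set (Vec n)} {ε : ℝ} {N : ℕ} {y z a b c : ℕ → Vec n}

theorem one_le_N (H : Alg3Setting Q P ε N y z a b c) : 1 ≤ N := by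
  rcases Nat.eq_zero_or_pos N with rfl | hN
  · simpa using H.hεN
  · exact hN

theorem y_mem (H : Alg3Setting Q P ε N y z a b c) : ∀ i ≤ N, y i ∈ Q := by
  intro i
  induction i with
  | zero => exact fun _ => H.hy0Q
  | succ m ih =>
    intro hm
    rw [H.hyrec (m + 1) (by omega) hm]
    exact H.hQconv (ih (by omega)) (H.haQ (m + 1) (by omega) hm) (by linarith [H.hε1])
      H.hε0.le (by ring)

theorem z_mem_smul (H : Alg3Setting Q P ε N y z a b c) : ∀ i ≤ N, z i ∈ (ε * i) • P := by
  intro i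
  induction i with
  | zero =>
    intro _
    rw [H.hz0, Nat.cast_zero, mul_zero, zero_smul_set ⟨b 1, H.hbP 1 le_rfl H.one_le_N⟩]
    rfl
  | succ m ih =>
    intro hm
    rw [H.hzrec (m + 1) (by omega) hm, Nat.cast_succ, mul_add_one]
    exact H.hPdown.add_smul_sub_mem H.hPconv (mul_nonneg H.hε0.le m.cast_nonneg) H.hε0.le H.hε1.le
      (ih (by omega)) (H.hbP (m + 1) (by omega) hm) (H.hc (m + 1) (by omega) hm)

theorem z_mem (H : Alg3Setting Q P ε N y z a b c) {i : ℕ} (hi : i ≤ N) : z i ∈ P := by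
  have hεi : ε * i ≤ 1 := by
    rw [← H.hεN, mul_comm]
    exact mul_le_mul_of_nonneg_right (Nat.cast_le.mpr hi) H.hε0.le
  exact H.hPdown.smul_set_subset (fun x hx j => (H.hPbox x hx j).1)
    (mul_nonneg H.hε0.le i.cast_nonneg) hεi (H.z_mem_smul i hi)

end Alg3Setting

/-- Lemma B.1 / `lem:membership_emp`: in the Algorithm 3 setting, for
every `0 ≤ i ≤ 1/ε`, `y⁽ⁱ⁾ ∈ Q` and `z⁽ⁱ⁾ ∈ εi·P`; consequently
`y⁽ⁱ⁾ ⊛ z⁽ⁱ⁾ ∈ (Q + P) ∩ [0,1]^n`. -/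
theorem stmt_19 {n : ℕ} (Q P : Set (Vec n)) (ε : ℝ) (N : ℕ) (y z a b c : ℕ → Vec n)
    (H : Alg3Setting Q P ε N y z a b c) :
    ∀ i ≤ N, y i ∈ Q ∧ (∃ x ∈ P, z i = (ε * i) • x) ∧
      psum (y i) (z i) ∈ (Q + P) ∩ {x : Vec n | inBox x} := by
  intro i hi
  obtain ⟨x, hxP, hzx⟩ := H.z_mem_smul i hi
  have hyQ := H.y_mem i hi
  have hzP := H.z_mem hi
  have hybox := H.hQbox _ hyQ
  have hzbox := H.hPbox _ hzP
  exact ⟨hyQ, ⟨x, hxP, hzx.symm⟩, psum_mem_add H.hPdown hyQ hzP hybox hzbox,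
    inBox_psum hybox hzbox⟩
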